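/- arXiv:1612.08856 — 3 statements merged into one kernel-verified Lean document; each statement's English description precedes it below -/
import Mathlib

section
/- For r ≥ 3 and N ≥ n, the complete r-uniform (n-1)-partite hypergraph T_r(N, n-1) (parts differing in size by at most 1) contains no complete r-uniform Berge-hypergraph of order n. Consequently, ex(N, F_n^{(r)}) ≥ t_r(N, n-1), where t_r(N, n-1) is the number of edges of T_r(N, n-1). -/
open scoped Classical

/-- `E` contains a complete `r`-uniform Berge-hypergraph of order `n`:
there are distinct core vertices `v 0, …, v (n-1)` and distinct edges `e i j`
(for `i < j`) with `v i, v j ∈ e i j`. -/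
def HasBergeK {V : Type*} (n : ℕ) (E : Finset (Finset V)) : Prop :=
  ∃ v : Fin n ↪ V, ∃ e : Fin n → Fin n → Finset V,
    (∀ i j : Fin n, i < j → e i j ∈ E ∧ v i ∈ e i j ∧ v j ∈ e i j) ∧
    (∀ i j i' j' : Fin n, i < j → i' < j' → e i j = e i' j' → i = i' ∧ j = j')

/-!
Every edge of `T_r(N, n - 1)` meets each of the `n - 1` parts at most once, so by pigeonhole two of
the `n` core vertices of a Berge-`K_n` lie in a common part and no edge can contain both.

An edge is an `r`-set `S` of parts together with one vertex from each, so there are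
`∑_S ∏_{p ∈ S} |V_p|` edges. With `|V_p| = ℓ + [p ∈ B]`, where `B` is the set of the `j` larger parts,
`∏_{p ∈ S} (ℓ + [p ∈ B]) = ∑_i C(|S ∩ B|, i) ℓ^(r - i)`, and double counting the pairs `T ⊆ S ∩ B`
with `|T| = i` gives `∑_S C(|S ∩ B|, i) = C(j, i) C(n - 1 - i, r - i)`.
-/

open Finset

variable {V ι : Type*}

section Hypergraph

variable (P : V → ι)

theorem not_hasBergeK_of_injOn [Fintype ι] {n : ℕ} (hn : Fintype.card ι < n)
    {E : Finset (Finset V)} (hE : ∀ e ∈ E, Set.InjOn P e) : ¬ HasBergeK n E := by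
  rintro ⟨v, e, he, -⟩
  obtain ⟨a, b, hab, hPab⟩ :=
    Fintype.exists_ne_map_eq_of_card_lt (P ∘ v) (by simpa using hn)
  wlog h : a < b generalizing a b
  · exact this b a hab.symm hPab.symm (hab.lt_or_gt.resolve_left h)
  obtain ⟨heE, ha, hb⟩ := he a b h
  exact hab (v.injective (hE _ heE ha hb hPab))

variable [DecidableEq ι]

lemma card_filter_fiber_le_one_iff_injOn {e : Finset V} :
    (∀ p, #(e.filter fun v => P v = p) ≤ 1) ↔ Set.InjOn P e := by
  refine ⟨fun h a ha b hb hab => ?_, fun h p => card_le_one_iff.2 fun ha hb => ?_⟩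
  · exact card_le_one_iff.1 (h (P a)) (mem_filter.2 ⟨ha, rfl⟩) (mem_filter.2 ⟨hb, hab.symm⟩)
  · rw [mem_filter] at ha hb
    exact h ha.1 hb.1 (ha.2.trans hb.2.symm)

lemma card_filter_injOn_image_eq [Fintype V] [DecidableEq V] (S : Finset ι) :
    #{e : Finset V | Set.InjOn P e ∧ e.image P = S} = ∏ p ∈ S, #{v | P v = p} := by
  have hsection : ∀ f ∈ S.pi fun p => ({v | P v = p} : Finset V), ∀ p hp, P (f p hp) = p :=
    fun f hf p hp => by simpa using mem_pi.1 hf p hp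
  rw [← card_pi, eq_comm]
  refine card_bij (fun f _ => S.attach.image fun p => f p.1 p.2) (fun f hf => ?_)
    (fun f hf g hg hfg => ?_) (fun e he => ?_)
  · simp only [mem_filter, mem_univ, true_and]
    refine ⟨?_, by ext p; simp [hsection f hf]⟩
    simp only [coe_image, Set.InjOn, Set.mem_image, mem_coe, mem_attach, true_and]
    rintro _ ⟨⟨p, hp⟩, rfl⟩ _ ⟨⟨q, hq⟩, rfl⟩ hpq
    obtain rfl : p = q := by rwa [hsection f hf, hsection f hf] at hpq
    rfl
  · funext p hp
    obtain ⟨⟨q, hq⟩, -, hgq⟩ :=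
      mem_image.1 (hfg ▸ mem_image_of_mem _ (mem_attach _ ⟨p, hp⟩) :
        f p hp ∈ S.attach.image fun q => g q.1 q.2)
    obtain rfl : q = p := by rw [← hsection g hg q hq, hgq, hsection f hf p hp]
    exact hgq.symm
  · obtain ⟨hinj, rfl⟩ : Set.InjOn P e ∧ e.image P = S := by simpa using he
    choose f hfe hPf using fun p (hp : p ∈ e.image P) => mem_image.1 hp
    refine ⟨f, mem_pi.2 fun p hp => by simp [hPf], ?_⟩
    ext v
    simp only [mem_image, mem_attach, true_and, Subtype.exists]
    refine ⟨?_, fun hv => ⟨P v, ⟨v, hv, rfl⟩, hinj (hfe _ _) hv (hPf _ _)⟩⟩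
    rintro ⟨p, hp, rfl⟩
    exact hfe p (mem_image.2 hp)

variable [Fintype V] [Fintype ι]

/-- The parts are the fibres of `P`; for a balanced `P : Fin N → Fin (n - 1)` this is
`T_r(N, n - 1)`. -/
def completePartiteHypergraph (r : ℕ) : Finset (Finset V) :=
  (univ : Finset (Finset V)).filter fun e =>
    e.card = r ∧ ∀ p : ι, (e.filter fun v => P v = p).card ≤ 1

lemma mem_completePartiteHypergraph {r : ℕ} {e : Finset V} :
    e ∈ completePartiteHypergraph P r ↔ #e = r ∧ Set.InjOn P e := by
  simp [completePartiteHypergraph, card_filter_fiber_le_one_iff_injOn]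

theorem not_hasBergeK_completePartiteHypergraph {n : ℕ} (hn : Fintype.card ι < n) (r : ℕ) :
    ¬ HasBergeK n (completePartiteHypergraph P r) :=
  not_hasBergeK_of_injOn P hn fun _ he => ((mem_completePartiteHypergraph P).1 he).2

theorem card_completePartiteHypergraph [DecidableEq V] (r : ℕ) :
    #(completePartiteHypergraph P r) = ∑ S ∈ powersetCard r univ, ∏ p ∈ S, #{v | P v = p} := by
  rw [card_eq_sum_card_fiberwise (f := fun e => e.image P) (t := powersetCard r univ)]
  · refine sum_congr rfl fun S hS => ?_
    rw [← card_filter_injOn_image_eq]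
    congr 1
    ext e
    simp only [mem_filter, mem_univ, true_and, mem_completePartiteHypergraph]
    constructor
    · rintro ⟨⟨-, hinj⟩, him⟩
      exact ⟨hinj, him⟩
    · rintro ⟨hinj, rfl⟩
      exact ⟨⟨by simpa [card_image_of_injOn hinj] using hS, hinj⟩, rfl⟩
  · intro e he
    obtain ⟨hcard, hinj⟩ := (mem_completePartiteHypergraph P).1 he
    simp [card_image_of_injOn hinj, hcard]

end Hypergraph

lemma add_one_pow_mul_pow_eq_sum {R : Type*} [CommSemiring R] (x : R) {a r : ℕ} (h : a ≤ r) :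
    (x + 1) ^ a * x ^ (r - a) = ∑ i ∈ range (r + 1), x ^ (r - i) * a.choose i := by
  have hextend : ∑ i ∈ range (a + 1), x ^ (r - i) * a.choose i =
      ∑ i ∈ range (r + 1), x ^ (r - i) * a.choose i :=
    sum_subset (range_subset_range.2 (by omega)) fun i _ hi => by
      rw [Nat.choose_eq_zero_of_lt (by simpa using hi), Nat.cast_zero, mul_zero]
  rw [← hextend, add_comm x 1, add_pow, sum_mul]
  refine sum_congr rfl fun i hi => ?_
  have hia : i ≤ a := Nat.lt_succ_iff.1 (mem_range.1 hi)
  rw [one_pow, one_mul, mul_right_comm, ← pow_add, add_comm, Nat.sub_add_sub_cancel h hia]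

lemma prod_ite_mem_eq_sum [DecidableEq ι] (S b : Finset ι) (ℓ : ℕ) :
    ∏ p ∈ S, (if p ∈ b then ℓ + 1 else ℓ) =
      ∑ i ∈ range (#S + 1), ℓ ^ (#S - i) * (#(S ∩ b)).choose i := by
  rw [prod_ite, prod_const, prod_const, filter_not, filter_mem_eq_inter,
    card_sdiff_of_subset inter_subset_left]
  exact add_one_pow_mul_pow_eq_sum _ (card_le_card inter_subset_left)

lemma sum_powersetCard_choose_card_inter [DecidableEq ι] {s b : Finset ι} (hb : b ⊆ s)
    {i r : ℕ} (hi : i ≤ r) :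
    ∑ S ∈ powersetCard r s, (#(S ∩ b)).choose i = (#b).choose i * (#s - i).choose (r - i) := by
  have hinter : ∀ S, powersetCard i (S ∩ b) = (powersetCard i b).filter (· ⊆ S) := by
    intro S; ext T; simp [subset_inter_iff]; tauto
  calc ∑ S ∈ powersetCard r s, (#(S ∩ b)).choose i
      = ∑ S ∈ powersetCard r s, #((powersetCard i b).bipartiteAbove (fun S T => T ⊆ S) S) := by
        simp only [bipartiteAbove, ← hinter, card_powersetCard]
    _ = ∑ T ∈ powersetCard i b, #((powersetCard r s).bipartiteBelow (fun S T => T ⊆ S) T) :=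
        sum_card_bipartiteAbove_eq_sum_card_bipartiteBelow _
    _ = ∑ T ∈ powersetCard i b, (#s - i).choose (r - i) := sum_congr rfl fun T hT => by
        obtain ⟨hTb, hTi⟩ := mem_powersetCard.1 hT
        rw [bipartiteBelow, card_filter_powersetCard_subset _ _ _ (hTb.trans hb) (hTi ▸ hi), hTi]
    _ = (#b).choose i * (#s - i).choose (r - i) := by
        rw [sum_const, card_powersetCard, smul_eq_mul]

theorem sum_powersetCard_prod_ite_mem [DecidableEq ι] {s b : Finset ι} (hb : b ⊆ s) (ℓ r : ℕ) :
    ∑ S ∈ powersetCard r s, ∏ p ∈ S, (if p ∈ b then ℓ + 1 else ℓ) =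
      ∑ i ∈ range (r + 1), ℓ ^ (r - i) * (#b).choose i * (#s - i).choose (r - i) := by
  calc ∑ S ∈ powersetCard r s, ∏ p ∈ S, (if p ∈ b then ℓ + 1 else ℓ)
      = ∑ S ∈ powersetCard r s, ∑ i ∈ range (r + 1), ℓ ^ (r - i) * (#(S ∩ b)).choose i :=
        sum_congr rfl fun S hS => by rw [prod_ite_mem_eq_sum, (mem_powersetCard.1 hS).2]
    _ = ∑ i ∈ range (r + 1), ℓ ^ (r - i) * ∑ S ∈ powersetCard r s, (#(S ∩ b)).choose i := by
        rw [sum_comm]; simp_rw [mul_sum]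
    _ = ∑ i ∈ range (r + 1), ℓ ^ (r - i) * (#b).choose i * (#s - i).choose (r - i) :=
        sum_congr rfl fun i hi => by
          rw [sum_powersetCard_choose_card_inter hb (Nat.lt_succ_iff.1 (mem_range.1 hi)), mul_assoc]

theorem stmt_4_general (r n ℓ j N : ℕ) (hn : r < n) (hj : j ≤ n - 1)
    (P : Fin N → Fin (n - 1))
    (hP : ∀ p : Fin (n - 1),
      (Finset.univ.filter fun v => P v = p).card = if (p : ℕ) < j then ℓ + 1 else ℓ) :
    ¬ HasBergeK n ((Finset.univ : Finset (Finset (Fin N))).filter fun e =>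
        e.card = r ∧ ∀ p : Fin (n - 1), (e.filter fun v => P v = p).card ≤ 1) ∧
    ((Finset.univ : Finset (Finset (Fin N))).filter fun e =>
        e.card = r ∧ ∀ p : Fin (n - 1), (e.filter fun v => P v = p).card ≤ 1).card =
      ∑ i ∈ Finset.range (r + 1), ℓ ^ (r - i) * Nat.choose j i * Nat.choose (n - 1 - i) (r - i) := by
  set big : Finset (Fin (n - 1)) := {p | (p : ℕ) < j}
  have hbig : #big = j := by simp [big, Fin.card_filter_val_lt, hj]
  have hfib : ∀ p, #{v | P v = p} = if p ∈ big then ℓ + 1 else ℓ := by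
    simp [big, hP]
  have hcard : #(completePartiteHypergraph P r) =
      ∑ i ∈ range (r + 1), ℓ ^ (r - i) * j.choose i * (n - 1 - i).choose (r - i) := by
    simp_rw [card_completePartiteHypergraph, hfib]
    rw [sum_powersetCard_prod_ite_mem (subset_univ big), card_univ, Fintype.card_fin, hbig]
  -- the two sides agree up to the decidability instances chosen for the filters
  convert (⟨not_hasBergeK_completePartiteHypergraph P (by rw [Fintype.card_fin]; omega) r, hcard⟩ :
      ¬ HasBergeK n (completePartiteHypergraph P r) ∧ _) using 3 <;>
    ext <;> simp [completePartiteHypergraph]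

theorem stmt_4 (r n ℓ j N : ℕ) (hr : 3 ≤ r) (hn : r < n) (hNn : n ≤ N)
    (hℓ : 1 ≤ ℓ) (hj1 : 1 ≤ j) (hj : j ≤ n - 1) (hN : N = ℓ * (n - 1) + j)
    (P : Fin N → Fin (n - 1))
    (hP : ∀ p : Fin (n - 1),
      (Finset.univ.filter fun v => P v = p).card = if (p : ℕ) < j then ℓ + 1 else ℓ) :
    ¬ HasBergeK n ((Finset.univ : Finset (Finset (Fin N))).filter fun e =>
        e.card = r ∧ ∀ p : Fin (n - 1), (e.filter fun v => P v = p).card ≤ 1) ∧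
    ((Finset.univ : Finset (Finset (Fin N))).filter fun e =>
        e.card = r ∧ ∀ p : Fin (n - 1), (e.filter fun v => P v = p).card ≤ 1).card =
      ∑ i ∈ Finset.range (r + 1), ℓ ^ (r - i) * Nat.choose j i * Nat.choose (n - 1 - i) (r - i) :=
  stmt_4_general r n ℓ j N hn hj P hP
end

section
/- For integers n ≥ 13, ℓ ≥ 2, 1 ≤ j ≤ n-1, and N = ℓ(n-1) + j, N' = (ℓ-1)(n-1) + j, the following inequality holds: C(n-1,3) + N'·C(n-2,2) + t_3(N', n-1) + t_2(N', n-1) ≤ t_3(N, n-1), where t_2(N', n-1) = (ℓ-1)^2 C(n-1,2) + j(ℓ-1)(n-2) + C(j,2) and t_3 is as defined. -/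
/-!
Write `m = ℓ - 1`, `p = n - 1`, `A = C(p,3)`, `B = C(p,2)`, `D = C(p-1,2)`. Expanding the two
Turán sums, `t_3(N) - t_3(N') = (3m² + 3m + 1) A + (2m + 1) j D + C(j,2) (p - 2)`. Since `p D = 3A`,
the term `m p D` of the left-hand side is `3m A`, and the rest is absorbed term by term:
`m² B ≤ 3m² A`, `j m (p - 1) ≤ 2 m j D` and `C(j,2) ≤ C(j,2) (p - 2)`, all valid once `p ≥ 6`.
-/

open Finset

namespace Nat

theorem mul_choose_sub_one_two (p : ℕ) : p * (p - 1).choose 2 = p.choose 3 * 3 := by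
  cases p with
  | zero => rfl
  | succ q => simpa using add_one_mul_choose_eq q 2

theorem choose_two_mul_two (q : ℕ) : q.choose 2 * 2 = q * (q - 1) := by
  cases q with
  | zero => rfl
  | succ r => simpa using (add_one_mul_choose_eq r 1).symm

theorem le_choose_two_mul_two {q : ℕ} (hq : 2 ≤ q) : q ≤ q.choose 2 * 2 := by
  rw [choose_two_mul_two]
  exact Nat.le_mul_of_pos_right q (by omega)

theorem choose_two_le_choose_three {p : ℕ} (hp : 6 ≤ p) : p.choose 2 ≤ p.choose 3 :=
  choose_le_succ_of_lt_half_left (by omega)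

end Nat

theorem sum_range_four_pow_mul_choose (m j p : ℕ) :
    ∑ i ∈ range 4, m ^ (3 - i) * j.choose i * (p - i).choose (3 - i) =
      m ^ 3 * p.choose 3 + m ^ 2 * j * (p - 1).choose 2 + m * j.choose 2 * (p - 2) +
        j.choose 3 := by
  simp [sum_range_succ]

theorem turan_three_step (m j p : ℕ) (hp : 6 ≤ p) :
    p.choose 3 + (m * p + j) * (p - 1).choose 2 +
        (m ^ 3 * p.choose 3 + m ^ 2 * j * (p - 1).choose 2 + m * j.choose 2 * (p - 2) +
          j.choose 3) +
        (m ^ 2 * p.choose 2 + j * m * (p - 1) + j.choose 2) ≤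
      (m + 1) ^ 3 * p.choose 3 + (m + 1) ^ 2 * j * (p - 1).choose 2 +
        (m + 1) * j.choose 2 * (p - 2) + j.choose 3 := by
  have hpD : m * (p * (p - 1).choose 2) = m * (p.choose 3 * 3) := by
    rw [Nat.mul_choose_sub_one_two]
  have hBA : m ^ 2 * p.choose 2 ≤ m ^ 2 * p.choose 3 :=
    Nat.mul_le_mul_left _ (Nat.choose_two_le_choose_three hp)
  have hD : j * m * (p - 1) ≤ j * m * ((p - 1).choose 2 * 2) :=
    Nat.mul_le_mul_left _ (Nat.le_choose_two_mul_two (by omega))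
  have hE : j.choose 2 ≤ j.choose 2 * (p - 2) := Nat.le_mul_of_pos_right _ (by omega)
  nlinarith [hpD, hBA, hD, hE]

theorem stmt_12_general (n ℓ j N' : ℕ) (hn : 13 ≤ n) (hℓ : 2 ≤ ℓ)
    (hN' : N' = (ℓ - 1) * (n - 1) + j) :
    Nat.choose (n - 1) 3 + N' * Nat.choose (n - 2) 2 +
        (∑ i ∈ Finset.range 4,
          (ℓ - 1) ^ (3 - i) * Nat.choose j i * Nat.choose (n - 1 - i) (3 - i)) +
        ((ℓ - 1) ^ 2 * Nat.choose (n - 1) 2 + j * (ℓ - 1) * (n - 2) + Nat.choose j 2) ≤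
      ∑ i ∈ Finset.range 4, ℓ ^ (3 - i) * Nat.choose j i * Nat.choose (n - 1 - i) (3 - i) := by
  obtain ⟨m, rfl⟩ : ∃ m, ℓ = m + 1 := ⟨ℓ - 1, by omega⟩
  obtain ⟨p, rfl⟩ : ∃ p, n = p + 1 := ⟨n - 1, by omega⟩
  have hn2 : p + 1 - 2 = p - 1 := by omega
  rw [hN', Nat.add_sub_cancel, Nat.add_sub_cancel, hn2, sum_range_four_pow_mul_choose,
    sum_range_four_pow_mul_choose]
  exact turan_three_step m j p (by omega)

theorem stmt_12 (n ℓ j N N' : ℕ) (hn : 13 ≤ n) (hℓ : 2 ≤ ℓ)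
    (hj1 : 1 ≤ j) (hj : j ≤ n - 1)
    (hN : N = ℓ * (n - 1) + j) (hN' : N' = (ℓ - 1) * (n - 1) + j) :
    Nat.choose (n - 1) 3 + N' * Nat.choose (n - 2) 2 +
        (∑ i ∈ Finset.range 4,
          (ℓ - 1) ^ (3 - i) * Nat.choose j i * Nat.choose (n - 1 - i) (3 - i)) +
        ((ℓ - 1) ^ 2 * Nat.choose (n - 1) 2 + j * (ℓ - 1) * (n - 2) + Nat.choose j 2) ≤
      ∑ i ∈ Finset.range 4, ℓ ^ (3 - i) * Nat.choose j i * Nat.choose (n - 1 - i) (3 - i) :=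
  stmt_12_general n ℓ j N' hn hℓ hN'
end

section
/- For n ≥ 13, ℓ ≥ 2, and 1 ≤ j ≤ n-1: 3ℓ·C(n-1,3) + (ℓ-1)^2·C(n-1,2) + (ℓ-1)(n-1)·C(n-2,2) ≤ 3ℓ^2·C(n-1,3). -/
/-!
Write `m = n - 1`, `k = ℓ - 1`. Since `m * C(m-1,2) = 3 * C(m,3)`, the third summand is
`3k * C(m,3)`, and `3(k+1)^2 = 3(k+1) + 3k + 3k^2`; so the inequality reduces to
`k^2 * C(m,2) ≤ 3k^2 * C(m,3)`, which holds because `3 * C(m,3) = (m-2) * C(m,2)` and `m ≥ 3`.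
-/

theorem Nat.choose_two_le_three_mul_choose_three {m : ℕ} (hm : 3 ≤ m) :
    m.choose 2 ≤ 3 * m.choose 3 := by
  have h : m.choose 3 * 3 = m.choose 2 * (m - 2) := Nat.choose_succ_right_eq m 2
  calc m.choose 2 = m.choose 2 * 1 := (mul_one _).symm
    _ ≤ m.choose 2 * (m - 2) := Nat.mul_le_mul_left _ (by omega)
    _ = 3 * m.choose 3 := by rw [← h, mul_comm]

theorem stmt_13_general (n ℓ : ℕ) (hn : 13 ≤ n) (hℓ : 2 ≤ ℓ) :
    3 * ℓ * Nat.choose (n - 1) 3 + (ℓ - 1) ^ 2 * Nat.choose (n - 1) 2 +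
        (ℓ - 1) * (n - 1) * Nat.choose (n - 2) 2 ≤
      3 * ℓ ^ 2 * Nat.choose (n - 1) 3 := by
  obtain ⟨m, rfl⟩ : ∃ m, n = m + 1 := ⟨n - 1, by omega⟩
  obtain ⟨k, rfl⟩ : ∃ k, ℓ = k + 1 := ⟨ℓ - 1, by omega⟩
  simp only [Nat.add_sub_cancel]
  obtain ⟨p, rfl⟩ : ∃ p, m = p + 1 := ⟨m - 1, by omega⟩
  have hthird : (p + 1) * p.choose 2 = (p + 1).choose 3 * 3 := Nat.add_one_mul_choose_eq p 2
  have hkey : k ^ 2 * (p + 1).choose 2 ≤ k ^ 2 * (3 * (p + 1).choose 3) :=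
    Nat.mul_le_mul_left _ (Nat.choose_two_le_three_mul_choose_three (by omega))
  have hpred : p + 1 + 1 - 2 = p := by omega
  rw [hpred, mul_assoc k, hthird]
  linarith [hkey]

theorem stmt_13 (n ℓ j : ℕ) (hn : 13 ≤ n) (hℓ : 2 ≤ ℓ) (hj1 : 1 ≤ j) (hj : j ≤ n - 1) :
    3 * ℓ * Nat.choose (n - 1) 3 + (ℓ - 1) ^ 2 * Nat.choose (n - 1) 2 +
        (ℓ - 1) * (n - 1) * Nat.choose (n - 2) 2 ≤
      3 * ℓ ^ 2 * Nat.choose (n - 1) 3 :=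
  stmt_13_general n ℓ hn hℓ
end
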